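/- arXiv:2307.07804 — 2 statements merged into one kernel-verified Lean document; each statement's English description precedes it below -/
import Mathlib

section
/- Let p be a prime, M ≥ 1 with p ∤ M, n ≥ 1, N = pⁿM, and 1 ≤ r ≤ n. For each j with r ≤ j ≤ n−1 let S_j ⊂ ℤ be a set of integers representing each residue class of (ℤ/p^{n−j}ℤ)ˣ exactly once, and for each s ∈ S_j let A_{s,j} ∈ SL₂(ℤ) be any matrix whose bottom row is (p^j M, p^{n−j} − sM). Then every element of Γ₀(p^r M) lies in exactly one of the right cosets Γ₀(N)·1 and Γ₀(N)·A_{s,j} (for r ≤ j ≤ n−1 and s ∈ S_j), and these cosets are pairwise distinct; in particular the index of Γ₀(N) in Γ₀(p^r M) equals 1 + Σ_{j=r}^{n−1} p^{n−j−1}(p−1) = p^{n−r}. -/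
/-!
A matrix with lower row `(c, d)` lies in `Γ₀(N) B` iff `N ∣ c B₁₁ - d B₁₀`, and for
`γ ∈ Γ₀(p^r M)` we have `p ∤ d`. Either `p^n M ∣ c`, which is the trivial coset, or
`c = p^j M e` with `r ≤ j < n` and `p ∤ e`. For the coset of `A_{s,j'}` the criterion reads
`c = p^{j'} M e'` with `e' M s + d ≡ 0 (mod p^{n-j'})`; this forces `p ∤ e'`, hence `j' = j` by
comparing `p`-adic valuations, and leaves a linear congruence for `s` whose solution is a unit,
represented exactly once in `S_j`. Counting, `|S_j| = φ(p^{n-j}) = p^{n-j-1}(p-1)`.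
-/

open scoped MatrixGroups
open CongruenceSubgroup

theorem Subgroup.relIndex_eq_card_of_existsUnique {G ι : Type*} [Group G] {H K : Subgroup G}
    (T : Finset ι) (g : ι → G) (hgK : ∀ i ∈ T, g i ∈ K)
    (hg : ∀ k ∈ K, ∃! i, i ∈ T ∧ ∃ h ∈ H, k = h * g i) :
    H.relIndex K = T.card := by
  let coset : T → Quotient (QuotientGroup.rightRel (H.subgroupOf K)) :=
    fun i => ⟦⟨g i, hgK i i.2⟩⟧
  have hbij : Function.Bijective coset := by
    constructor
    · rintro ⟨i, hi⟩ ⟨i', hi'⟩ h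
      obtain ⟨δ, hδ, heq⟩ : ∃ δ ∈ H, g i' = δ * g i :=
        ⟨g i' * (g i)⁻¹, by simpa [QuotientGroup.rightRel_apply, Subgroup.mem_subgroupOf]
          using Quotient.exact h, by group⟩
      exact Subtype.ext <|
        (hg _ (hgK i' hi')).unique ⟨hi, δ, hδ, heq⟩ ⟨hi', 1, H.one_mem, by simp⟩
    · rintro ⟨k⟩
      obtain ⟨i, ⟨hi, δ, hδ, hk⟩, -⟩ := hg k k.2
      refine ⟨⟨i, hi⟩, Quotient.sound ?_⟩
      simpa [QuotientGroup.rightRel_apply, Subgroup.mem_subgroupOf, hk] using hδ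
  rw [Subgroup.relIndex, Subgroup.index, ← Nat.card_congr
    (QuotientGroup.quotientRightRelEquivQuotientLeftRel _), ← Nat.card_eq_of_bijective _ hbij,
    Nat.card_eq_finsetCard]

theorem Prime.pow_dvd_pow_mul_iff_le {α : Type*} [CommMonoidWithZero α] [IsCancelMulZero α]
    {p e : α} (hp : Prime p) (he : ¬ p ∣ e) {a j : ℕ} : p ^ a ∣ p ^ j * e ↔ a ≤ j := by
  refine ⟨fun h => ?_, fun h => (pow_dvd_pow p h).mul_right e⟩
  by_contra! hja
  refine he ((mul_dvd_mul_iff_left (pow_ne_zero j hp.ne_zero)).1 ?_)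
  rw [← pow_succ]
  exact (pow_dvd_pow p hja).trans h

theorem Prime.eq_and_eq_of_pow_mul_eq_pow_mul {α : Type*} [CommMonoidWithZero α]
    [IsCancelMulZero α] {p e e' : α} (hp : Prime p) (he : ¬ p ∣ e) (he' : ¬ p ∣ e')
    {j j' : ℕ} (h : p ^ j * e = p ^ j' * e') : j = j' ∧ e = e' := by
  obtain rfl : j = j' := le_antisymm ((hp.pow_dvd_pow_mul_iff_le he').1 (h ▸ dvd_mul_right _ _))
    ((hp.pow_dvd_pow_mul_iff_le he).1 (h ▸ dvd_mul_right _ _))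
  exact ⟨rfl, mul_left_cancel₀ (pow_ne_zero j hp.ne_zero) h⟩

namespace Int

variable {p M : ℤ}

theorem exists_eq_pow_mul_mul_of_dvd_of_not_dvd (hp : Prime p) {r n : ℕ} {c : ℤ}
    (hc : p ^ r * M ∣ c) (hnc : ¬ p ^ n * M ∣ c) :
    ∃ j, r ≤ j ∧ j < n ∧ ∃ e, c = p ^ j * M * e ∧ ¬ p ∣ e := by
  obtain ⟨c', rfl⟩ := hc
  have hc' : c' ≠ 0 := by rintro rfl; simp at hnc
  obtain ⟨e, hce, hpe⟩ :=
    (FiniteMultiplicity.of_prime_left hp hc').exists_eq_pow_mul_and_not_dvd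
  generalize multiplicity p c' = k at hce
  have hc : p ^ r * M * c' = p ^ (r + k) * M * e := by rw [hce, pow_add]; ring
  refine ⟨_, Nat.le_add_right _ _, ?_, e, hc, hpe⟩
  by_contra! hnj
  exact hnc (hc ▸ (mul_dvd_mul_right (pow_dvd_pow p hnj) M).mul_right e)

theorem dvd_sub_mul_iff_exists (hp : Prime p) (hpM : ¬ p ∣ M) {j n : ℕ} (hjn : j < n) {s : ℤ}
    (hs : ¬ p ∣ s) (c d : ℤ) :
    p ^ n * M ∣ c * (p ^ (n - j) - s * M) - d * (p ^ j * M) ↔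
      ∃ e, c = p ^ j * M * e ∧ p ^ (n - j) ∣ e * M * s + d := by
  have hN : p ^ n * M = p ^ (n - j) * (p ^ j * M) := by
    rw [← mul_assoc, ← pow_add, Nat.sub_add_cancel hjn.le]
  have hpjM : p ^ j * M ≠ 0 := mul_ne_zero (pow_ne_zero _ hp.ne_zero) (by rintro rfl; simp at hpM)
  have expand (e : ℤ) : p ^ j * M * e * (p ^ (n - j) - s * M) - d * (p ^ j * M) =
      (p ^ (n - j) * e - (e * M * s + d)) * (p ^ j * M) := by ring
  constructor
  · intro h
    have hcop : IsCoprime (p ^ j * M) (p ^ (n - j) - s * M) := by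
      refine IsCoprime.mul_left ((hp.coprime_iff_not_dvd.2 fun hdvd => ?_).pow_left) ?_
      · have : p ∣ s * M := (dvd_sub_right (dvd_pow_self p (by omega))).1 hdvd
        exact (hp.dvd_mul.1 this).elim hs hpM
      · simpa [sub_eq_add_neg, mul_comm s] using
          ((hp.coprime_iff_not_dvd.2 hpM).pow_left (m := n - j)).symm.add_mul_left_right (-s)
    have hpjM_dvd : p ^ j * M ∣ c * (p ^ (n - j) - s * M) :=
      (dvd_sub_left (dvd_mul_left _ d)).1 ((hN ▸ dvd_mul_left _ _ : _ ∣ p ^ n * M).trans h)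
    obtain ⟨e, rfl⟩ := hcop.dvd_of_dvd_mul_right hpjM_dvd
    refine ⟨e, rfl, ?_⟩
    rwa [expand, hN, mul_dvd_mul_iff_right hpjM, dvd_sub_right (dvd_mul_right _ _)] at h
  · rintro ⟨e, rfl, h⟩
    rw [expand, hN, mul_dvd_mul_iff_right hpjM]
    exact dvd_sub (dvd_mul_right _ _) h

end Int

theorem ZMod.isUnit_intCast_iff_not_dvd_pow {p d : ℕ} (hp : p.Prime) (hd : 0 < d) {x : ℤ} :
    IsUnit (x : ZMod (p ^ d)) ↔ ¬ (p : ℤ) ∣ x := by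
  obtain ⟨a, rfl | rfl⟩ := x.eq_nat_or_neg <;>
    simp [ZMod.isUnit_natCast_iff_not_dvd_pow hp hd, Int.natCast_dvd_natCast]

theorem Finset.existsUnique_mem_mul_add_eq_zero {m : ℕ} {S : Finset ℤ}
    (hS : ∀ u : (ZMod m)ˣ, ∃! s, s ∈ S ∧ (s : ZMod m) = u) {a b : ZMod m} (ha : IsUnit a)
    (hb : IsUnit b) : ∃! s, s ∈ S ∧ a * s + b = 0 := by
  obtain ⟨u, rfl⟩ := ha
  obtain ⟨v, rfl⟩ := hb
  have key (x : ZMod m) : u * x + v = 0 ↔ x = ((u⁻¹ * -v : (ZMod m)ˣ) : ZMod m) := by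
    rw [Units.val_mul, Units.eq_inv_mul_iff_mul_eq, Units.val_neg, add_eq_zero_iff_eq_neg]
  simpa only [key] using hS (u⁻¹ * -v)

theorem Finset.existsUnique_mem_pow_dvd_mul_add {p k : ℕ} (hp : p.Prime) (hk : 0 < k)
    {S : Finset ℤ} (hS : ∀ u : (ZMod (p ^ k))ˣ, ∃! s, s ∈ S ∧ (s : ZMod (p ^ k)) = u)
    {a b : ℤ} (ha : ¬ (p : ℤ) ∣ a) (hb : ¬ (p : ℤ) ∣ b) :
    ∃! s, s ∈ S ∧ (p : ℤ) ^ k ∣ a * s + b := by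
  simp_rw [← Nat.cast_pow, ← ZMod.intCast_zmod_eq_zero_iff_dvd, Int.cast_add, Int.cast_mul]
  exact existsUnique_mem_mul_add_eq_zero hS ((ZMod.isUnit_intCast_iff_not_dvd_pow hp hk).2 ha)
    ((ZMod.isUnit_intCast_iff_not_dvd_pow hp hk).2 hb)

theorem Finset.card_eq_totient_of_represents_units {m : ℕ} [NeZero m] {S : Finset ℤ}
    (hunit : ∀ s ∈ S, IsUnit (s : ZMod m))
    (hS : ∀ u : (ZMod m)ˣ, ∃! s, s ∈ S ∧ (s : ZMod m) = u) : S.card = m.totient := by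
  rw [← ZMod.card_units_eq_totient, ← Finset.card_univ]
  refine Finset.card_bij (fun s hs => (hunit s hs).unit) (fun _ _ => Finset.mem_univ _)
    (fun a ha b hb hab => ?_) (fun u _ => ?_)
  · obtain ⟨s, -, huniq⟩ := hS (hunit a ha).unit
    rw [huniq a ⟨ha, rfl⟩, huniq b ⟨hb, by simpa using congrArg Units.val hab.symm⟩]
  · obtain ⟨s, ⟨hs, hsu⟩, -⟩ := hS u
    exact ⟨s, hs, Units.ext hsu⟩

theorem Nat.one_add_sum_Icc_pow_mul_sub_one {p r : ℕ} (hp : 1 ≤ p) (hr : 1 ≤ r) (n : ℕ) :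
    1 + ∑ j ∈ Finset.Icc r (n - 1), p ^ (n - j - 1) * (p - 1) = p ^ (n - r) := by
  have hIcc : Finset.Icc r (n - 1) = Finset.Ico r n := by ext; simp; omega
  have hexp : ∀ k ∈ Finset.range (n - r), n - (r + (n - r - 1 - k)) - 1 = k := by
    intro k hk; rw [Finset.mem_range] at hk; omega
  rw [hIcc, Finset.sum_Ico_eq_sum_range, ← Finset.sum_range_reflect, ← Finset.sum_mul,
    Finset.sum_congr rfl fun k hk => by rw [hexp k hk], geom_sum_mul_of_one_le hp]
  have := Nat.one_le_pow (n - r) p hp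
  omega

theorem CongruenceSubgroup.Gamma0_mem_iff_dvd {N : ℕ} {γ : SL(2, ℤ)} :
    γ ∈ Gamma0 N ↔ (N : ℤ) ∣ γ 1 0 := by
  rw [Gamma0_mem, ZMod.intCast_zmod_eq_zero_iff_dvd]

theorem CongruenceSubgroup.exists_mem_Gamma0_mul_eq_iff {N : ℕ} {γ B : SL(2, ℤ)} :
    (∃ δ ∈ Gamma0 N, γ = δ * B) ↔ (N : ℤ) ∣ γ 1 0 * B 1 1 - γ 1 1 * B 1 0 := by
  have lower_left (δ : SL(2, ℤ)) : (δ * B) 1 0 * B 1 1 - (δ * B) 1 1 * B 1 0 = δ 1 0 := by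
    have hB : B 0 0 * B 1 1 - B 0 1 * B 1 0 = 1 := by rw [← Matrix.det_fin_two]; exact B.2
    simp only [Matrix.SpecialLinearGroup.coe_mul, Matrix.mul_apply, Fin.sum_univ_two]
    linear_combination δ 1 0 * hB
  constructor
  · rintro ⟨δ, hδ, rfl⟩
    rw [lower_left]
    exact Gamma0_mem_iff_dvd.1 hδ
  · intro h
    refine ⟨γ * B⁻¹, Gamma0_mem_iff_dvd.2 ?_, by group⟩
    rwa [← lower_left, inv_mul_cancel_right]

theorem CongruenceSubgroup.not_dvd_of_mem_Gamma0 {N : ℕ} {γ : SL(2, ℤ)} (hγ : γ ∈ Gamma0 N)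
    {q : ℤ} (hq : ¬ IsUnit q) (hqN : q ∣ N) : ¬ q ∣ γ 1 1 := by
  intro hd
  have hc : q ∣ γ 1 0 := hqN.trans (Gamma0_mem_iff_dvd.1 hγ)
  have hdet : γ 0 0 * γ 1 1 - γ 0 1 * γ 1 0 = 1 := by rw [← Matrix.det_fin_two]; exact γ.2
  exact hq (isUnit_of_dvd_one (hdet ▸ dvd_sub (hd.mul_left _) (hc.mul_left _)))

theorem CongruenceSubgroup.exists_mem_Gamma0_mul_iff_of_lower_row {p M n j : ℕ} (hp : p.Prime)
    (hpM : ¬ p ∣ M) (hjn : j < n) {s : ℤ} (hs : ¬ (p : ℤ) ∣ s) {γ B : SL(2, ℤ)}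
    (hB : B 1 0 = (p : ℤ) ^ j * M ∧ B 1 1 = (p : ℤ) ^ (n - j) - s * M) :
    (∃ δ ∈ Gamma0 (p ^ n * M), γ = δ * B) ↔
      ∃ e, γ 1 0 = p ^ j * M * e ∧ (p : ℤ) ^ (n - j) ∣ e * M * s + γ 1 1 := by
  rw [exists_mem_Gamma0_mul_eq_iff, hB.1, hB.2, Nat.cast_mul, Nat.cast_pow]
  exact Int.dvd_sub_mul_iff_exists (Nat.prime_iff_prime_int.mp hp) (by exact_mod_cast hpM) hjn hs
    _ _

theorem existsUnique_coset_of_mem_Gamma0 (p M n r : ℕ) (hp : p.Prime) (hpM : ¬ p ∣ M)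
    (hr : 1 ≤ r) (S : ℕ → Finset ℤ)
    (hSunit : ∀ j, r ≤ j → j ≤ n - 1 → ∀ s ∈ S j, IsUnit ((s : ZMod (p ^ (n - j)))))
    (hSrep : ∀ j, r ≤ j → j ≤ n - 1 → ∀ u : (ZMod (p ^ (n - j)))ˣ,
      ∃! s, s ∈ S j ∧ ((s : ZMod (p ^ (n - j))) = (u : ZMod (p ^ (n - j)))))
    (A : ℕ → ℤ → SL(2, ℤ))
    (hA : ∀ j, r ≤ j → j ≤ n - 1 → ∀ s ∈ S j,
      ((A j s : Matrix (Fin 2) (Fin 2) ℤ) 1 0 = (p : ℤ) ^ j * M ∧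
        (A j s : Matrix (Fin 2) (Fin 2) ℤ) 1 1 = (p : ℤ) ^ (n - j) - s * M))
    {γ : SL(2, ℤ)} (hγ : γ ∈ Gamma0 (p ^ r * M)) :
    ∃! o : Option (ℕ × ℤ),
      o.elim (γ ∈ Gamma0 (p ^ n * M))
        (fun x => (r ≤ x.1 ∧ x.1 ≤ n - 1 ∧ x.2 ∈ S x.1) ∧
          ∃ δ ∈ Gamma0 (p ^ n * M), γ = δ * A x.1 x.2) := by
  have hp' : Prime (p : ℤ) := Nat.prime_iff_prime_int.mp hp
  have hpM' : ¬ (p : ℤ) ∣ M := by exact_mod_cast hpM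
  have hd : ¬ (p : ℤ) ∣ γ 1 1 := not_dvd_of_mem_Gamma0 hγ hp'.not_isUnit
    (by push_cast; exact (dvd_pow_self _ (by omega)).mul_right _)
  have hMe {k : ℕ} {e s : ℤ} (hk : k ≠ 0) (h : (p : ℤ) ^ k ∣ e * M * s + γ 1 1) :
      ¬ (p : ℤ) ∣ M * e := fun hdvd =>
    hd ((dvd_add_right (by rw [mul_comm e]; exact hdvd.mul_right s)).1
      ((dvd_pow_self _ hk).trans h))
  have hcoset {j : ℕ} {s : ℤ} (hrj : r ≤ j) (hjn : j ≤ n - 1) (hs : s ∈ S j) :=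
    exists_mem_Gamma0_mul_iff_of_lower_row (γ := γ) hp hpM (by omega)
      ((ZMod.isUnit_intCast_iff_not_dvd_pow hp (by omega)).1 (hSunit j hrj hjn s hs))
      (hA j hrj hjn s hs)
  have hmem (k : ℕ) : γ ∈ Gamma0 (p ^ k * M) ↔ (p : ℤ) ^ k * M ∣ γ 1 0 := by
    rw [Gamma0_mem_iff_dvd]; push_cast; rfl
  by_cases hNc : (p : ℤ) ^ n * M ∣ γ 1 0
  · refine ⟨none, (hmem n).2 hNc, ?_⟩
    rintro (_ | ⟨j, s⟩) h
    · rfl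
    obtain ⟨⟨hrj, hjn, hs⟩, hδ⟩ := h
    obtain ⟨e, hce, hdvd⟩ := (hcoset hrj hjn hs).1 hδ
    rw [mul_assoc] at hce
    have : n ≤ j := (hp'.pow_dvd_pow_mul_iff_le (hMe (by omega) hdvd)).1
      (hce ▸ (dvd_mul_right _ _).trans hNc)
    omega
  obtain ⟨j, hrj, hjn, e, hce, hpe⟩ := Int.exists_eq_pow_mul_mul_of_dvd_of_not_dvd hp'
    ((hmem r).1 hγ) hNc
  obtain ⟨s, ⟨hs, hdvd⟩, hsuniq⟩ := Finset.existsUnique_mem_pow_dvd_mul_add hp (by omega)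
    (hSrep j hrj (by omega)) (fun h => (hp'.dvd_mul.1 h).elim hpe hpM') hd
  refine ⟨some (j, s),
    ⟨⟨hrj, by omega, hs⟩, (hcoset hrj (by omega) hs).2 ⟨e, hce, hdvd⟩⟩, ?_⟩
  rintro (_ | ⟨j', s'⟩) h
  · exact absurd ((hmem n).1 h) hNc
  obtain ⟨⟨hrj', hjn', hs'⟩, hδ⟩ := h
  obtain ⟨e', hce', hdvd'⟩ := (hcoset hrj' hjn' hs').1 hδ
  rw [mul_assoc] at hce hce'
  obtain ⟨rfl, hMe_eq⟩ := hp'.eq_and_eq_of_pow_mul_eq_pow_mul (hMe (by omega) hdvd')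
    (fun h => (hp'.dvd_mul.1 h).elim hpM' hpe) (hce' ▸ hce)
  obtain rfl : e' = e := mul_left_cancel₀ (by rintro h; simp [h] at hpM') hMe_eq
  rw [hsuniq s' ⟨hs', hdvd'⟩]

theorem relIndex_Gamma0_pow_mul (p M n r : ℕ) (hp : p.Prime) (hpM : ¬ p ∣ M)
    (hr : 1 ≤ r) (S : ℕ → Finset ℤ)
    (hSunit : ∀ j, r ≤ j → j ≤ n - 1 → ∀ s ∈ S j, IsUnit ((s : ZMod (p ^ (n - j)))))
    (hSrep : ∀ j, r ≤ j → j ≤ n - 1 → ∀ u : (ZMod (p ^ (n - j)))ˣ,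
      ∃! s, s ∈ S j ∧ ((s : ZMod (p ^ (n - j))) = (u : ZMod (p ^ (n - j)))))
    (A : ℕ → ℤ → SL(2, ℤ))
    (hA : ∀ j, r ≤ j → j ≤ n - 1 → ∀ s ∈ S j,
      ((A j s : Matrix (Fin 2) (Fin 2) ℤ) 1 0 = (p : ℤ) ^ j * M ∧
        (A j s : Matrix (Fin 2) (Fin 2) ℤ) 1 1 = (p : ℤ) ^ (n - j) - s * M)) :
    (Gamma0 (p ^ n * M)).relIndex (Gamma0 (p ^ r * M)) = p ^ (n - r) := by
  let T : Finset (Option (ℕ × ℤ)) :=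
    ((Finset.Icc r (n - 1)).sigma S).map (Equiv.sigmaEquivProd ℕ ℤ).toEmbedding |>.insertNone
  have hT (j : ℕ) (s : ℤ) : some (j, s) ∈ T ↔ r ≤ j ∧ j ≤ n - 1 ∧ s ∈ S j := by
    simp [T, and_assoc]
  rw [Subgroup.relIndex_eq_card_of_existsUnique T (fun o => o.elim 1 fun x => A x.1 x.2) ?_ ?_]
  · rw [Finset.card_insertNone, Finset.card_map, Finset.card_sigma, add_comm,
      ← Nat.one_add_sum_Icc_pow_mul_sub_one hp.one_lt.le hr n]
    refine congrArg _ (Finset.sum_congr rfl fun j hj => ?_)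
    rw [Finset.mem_Icc] at hj
    have : NeZero (p ^ (n - j)) := ⟨pow_ne_zero _ hp.ne_zero⟩
    rw [Finset.card_eq_totient_of_represents_units (hSunit j hj.1 hj.2) (hSrep j hj.1 hj.2),
      Nat.totient_prime_pow hp (by omega)]
  · rintro (_ | ⟨j, s⟩) h
    · exact one_mem _
    · obtain ⟨hrj, hjn, hs⟩ := (hT j s).1 h
      rw [Option.elim_some, Gamma0_mem_iff_dvd, (hA j hrj hjn s hs).1]
      push_cast
      exact mul_dvd_mul_right (pow_dvd_pow _ hrj) _
  · intro γ hγ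
    refine (existsUnique_congr fun o => ?_).1
      (existsUnique_coset_of_mem_Gamma0 p M n r hp hpM hr S hSunit hSrep A hA hγ)
    rcases o with _ | ⟨j, s⟩
    · simp [T]
    · simp only [Option.elim, hT]

theorem stmt16_general (p M n r : ℕ) (hp : p.Prime) (hpM : ¬ p ∣ M)
    (hr : 1 ≤ r)
    (S : ℕ → Finset ℤ)
    (hSunit : ∀ j, r ≤ j → j ≤ n - 1 → ∀ s ∈ S j, IsUnit ((s : ZMod (p ^ (n - j)))))
    (hSrep : ∀ j, r ≤ j → j ≤ n - 1 → ∀ u : (ZMod (p ^ (n - j)))ˣ,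
      ∃! s, s ∈ S j ∧ ((s : ZMod (p ^ (n - j))) = (u : ZMod (p ^ (n - j)))))
    (A : ℕ → ℤ → SL(2, ℤ))
    (hA : ∀ j, r ≤ j → j ≤ n - 1 → ∀ s ∈ S j,
      ((A j s : Matrix (Fin 2) (Fin 2) ℤ) 1 0 = (p : ℤ) ^ j * M ∧
        (A j s : Matrix (Fin 2) (Fin 2) ℤ) 1 1 = (p : ℤ) ^ (n - j) - s * M)) :
    (∀ γ : SL(2, ℤ), γ ∈ CongruenceSubgroup.Gamma0 (p ^ r * M) →
      ∃! o : Option (ℕ × ℤ),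
        o.elim (γ ∈ CongruenceSubgroup.Gamma0 (p ^ n * M))
          (fun x => (r ≤ x.1 ∧ x.1 ≤ n - 1 ∧ x.2 ∈ S x.1) ∧
            ∃ δ ∈ CongruenceSubgroup.Gamma0 (p ^ n * M), γ = δ * A x.1 x.2)) ∧
    1 + ∑ j ∈ Finset.Icc r (n - 1), p ^ (n - j - 1) * (p - 1) = p ^ (n - r) ∧
    (CongruenceSubgroup.Gamma0 (p ^ n * M)).relIndex
        (CongruenceSubgroup.Gamma0 (p ^ r * M)) = p ^ (n - r) :=
  ⟨fun _ hγ => existsUnique_coset_of_mem_Gamma0 p M n r hp hpM hr S hSunit hSrep A hA hγ,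
    Nat.one_add_sum_Icc_pow_mul_sub_one hp.one_lt.le hr n,
    relIndex_Gamma0_pow_mul p M n r hp hpM hr S hSunit hSrep A hA⟩

/-- Let `N = pⁿM` with `p ∤ M`. Given, for each `r ≤ j ≤ n−1`, a set `S j` of integers
representing each class of `(ℤ/p^{n−j}ℤ)ˣ` exactly once, and matrices
`A_{s,j} ∈ SL₂(ℤ)` with bottom row `(p^j M, p^{n−j} − sM)`, every element of `Γ₀(p^r M)`
lies in exactly one of the right cosets `Γ₀(N)·1`, `Γ₀(N)·A_{s,j}`; in particular the
index of `Γ₀(N)` in `Γ₀(p^r M)` is `1 + Σ_{j=r}^{n−1} p^{n−j−1}(p−1) = p^{n−r}`. -/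
theorem stmt16 (p M n r : ℕ) (hp : p.Prime) (hM : 1 ≤ M) (hpM : ¬ p ∣ M)
    (hn : 1 ≤ n) (hr : 1 ≤ r) (hrn : r ≤ n)
    (S : ℕ → Finset ℤ)
    (hSunit : ∀ j, r ≤ j → j ≤ n - 1 → ∀ s ∈ S j, IsUnit ((s : ZMod (p ^ (n - j)))))
    (hSrep : ∀ j, r ≤ j → j ≤ n - 1 → ∀ u : (ZMod (p ^ (n - j)))ˣ,
      ∃! s, s ∈ S j ∧ ((s : ZMod (p ^ (n - j))) = (u : ZMod (p ^ (n - j)))))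
    (A : ℕ → ℤ → SL(2, ℤ))
    (hA : ∀ j, r ≤ j → j ≤ n - 1 → ∀ s ∈ S j,
      ((A j s : Matrix (Fin 2) (Fin 2) ℤ) 1 0 = (p : ℤ) ^ j * M ∧
        (A j s : Matrix (Fin 2) (Fin 2) ℤ) 1 1 = (p : ℤ) ^ (n - j) - s * M)) :
    (∀ γ : SL(2, ℤ), γ ∈ CongruenceSubgroup.Gamma0 (p ^ r * M) →
      ∃! o : Option (ℕ × ℤ),
        o.elim (γ ∈ CongruenceSubgroup.Gamma0 (p ^ n * M))
          (fun x => (r ≤ x.1 ∧ x.1 ≤ n - 1 ∧ x.2 ∈ S x.1) ∧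
            ∃ δ ∈ CongruenceSubgroup.Gamma0 (p ^ n * M), γ = δ * A x.1 x.2)) ∧
    1 + ∑ j ∈ Finset.Icc r (n - 1), p ^ (n - j - 1) * (p - 1) = p ^ (n - r) ∧
    (CongruenceSubgroup.Gamma0 (p ^ n * M)).relIndex
        (CongruenceSubgroup.Gamma0 (p ^ r * M)) = p ^ (n - r) :=
  stmt16_general p M n r hp hpM hr S hSunit hSrep A hA
end

section
/- (i) f∣ₖW = p^{k−1}·χ(p mod M)·f_p, where f_p : ℍ → ℂ is defined by f_p(z) = f(pz); (ii) f_p∣ₖW = p^{−1}·f. Consequently the Atkin–Lehner matrix W maps the function f to a multiple of f_p and maps f_p back to a multiple of f. -/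
/-!
With `D = diag(p, 1)`, which acts by `f ∣ₖ D = p^{k-1} f_p`, the matrix `W` factors as
`W = γ₁ D` with `γ₁ = (β, 1; Mγ₀, p) ∈ Γ₀(M)`, and `D W = γ₂ · p` with
`γ₂ = (pβ, 1; Mγ₀, 1) ∈ Γ₀(M)`. Since `f ∣ₖ γ₁ = χ(p) f`, `f ∣ₖ γ₂ = f`, and the
scalar matrix `p` acts by `p^{k-2}`, both identities follow from the cocycle property
of the slash.
-/

open UpperHalfPlane ModularForm
open scoped MatrixGroups ModularForm

/-- The point `p·z` of the upper half-plane. -/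
noncomputable def scaleH (c : ℝ) (hc : 0 < c) (z : ℍ) : ℍ :=
  ⟨c * (z : ℂ), by
    have hz := z.2
    rw [Complex.mul_im, Complex.ofReal_re, Complex.ofReal_im]
    simpa using mul_pos hc hz⟩

lemma σ_apply_of_det_pos {g : GL (Fin 2) ℝ} (hg : 0 < g.det.val) (z : ℂ) : σ g z = z := by
  rw [σ, if_pos hg]
  rfl

lemma smul_slash_of_det_pos (k : ℤ) {g : GL (Fin 2) ℝ} (hg : 0 < g.det.val) (f : ℍ → ℂ)
    (c : ℂ) : (c • f) ∣[k] g = c • f ∣[k] g := by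
  rw [smul_slash, σ_apply_of_det_pos hg]

lemma slash_scalar (k : ℤ) (u : ℝˣ) (f : ℍ → ℂ) :
    f ∣[k] Matrix.GeneralLinearGroup.scalar (Fin 2) u = ((u : ℝ) : ℂ) ^ (k - 2) • f := by
  ext z
  have hu : ((u : ℝ) : ℂ) ≠ 0 := by simp
  have hpow :
      (((u : ℝ) : ℂ) ^ 2) ^ (k - 1) * ((u : ℝ) : ℂ) ^ (-k) = ((u : ℝ) : ℂ) ^ (k - 2) := by
    rw [← zpow_natCast, ← zpow_mul, ← zpow_add₀ hu]
    ring_nf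
  rw [slash_apply, glScalar_smul, denom_scalar, σ_apply_of_det_pos (by simp [sq_pos_iff]),
    mul_assoc, ← hpow]
  simp [mul_comm]

@[simp]
lemma SL2Z_coe_GL_apply (g : SL(2, ℤ)) (i j : Fin 2) :
    ((g : GL (Fin 2) ℝ) : Matrix (Fin 2) (Fin 2) ℝ) i j = g i j := rfl

noncomputable def scaleGL (c : ℝ) (hc : 0 < c) : GL (Fin 2) ℝ :=
  .mkOfDetNeZero !![c, 0; 0, 1] (by simpa using hc.ne')

section scaleGL

variable {c : ℝ} (hc : 0 < c)

lemma scaleGL_det_pos : 0 < (scaleGL c hc).det.val := by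
  simpa [scaleGL] using hc

lemma scaleGL_smul (z : ℍ) : scaleGL c hc • z = scaleH c hc z := by
  ext
  rw [coe_smul_of_det_pos (scaleGL_det_pos hc)]
  simp [num, denom, scaleGL, scaleH]

lemma slash_scaleGL (k : ℤ) (f : ℍ → ℂ) :
    f ∣[k] scaleGL c hc = (c : ℂ) ^ (k - 1) • fun z ↦ f (scaleH c hc z) := by
  ext z
  rw [slash_apply, scaleGL_smul, σ_apply_of_det_pos (scaleGL_det_pos hc)]
  simp [denom, scaleGL, abs_of_pos hc, mul_comm]

lemma comp_scaleH_eq_smul_slash_scaleGL (k : ℤ) (f : ℍ → ℂ) :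
    (fun z ↦ f (scaleH c hc z)) = (c : ℂ) ^ (1 - k) • f ∣[k] scaleGL c hc := by
  have hc' : (c : ℂ) ≠ 0 := by exact_mod_cast hc.ne'
  rw [slash_scaleGL, smul_smul, ← zpow_add₀ hc']
  simp

end scaleGL

section AtkinLehner

variable {p M : ℕ} {β γ₀ : ℤ} (hβ : (p : ℤ) * β - M * γ₀ = 1)

def atkinLehnerLeft : SL(2, ℤ) :=
  ⟨!![β, 1; M * γ₀, p], by simp [Matrix.det_fin_two_of]; linarith⟩

def atkinLehnerRight : SL(2, ℤ) :=
  ⟨!![p * β, 1; M * γ₀, 1], by simp [Matrix.det_fin_two_of]; linarith⟩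

lemma atkinLehnerLeft_mem_Gamma0 : atkinLehnerLeft hβ ∈ CongruenceSubgroup.Gamma0 M := by
  rw [CongruenceSubgroup.Gamma0_mem]
  simp [atkinLehnerLeft]

lemma atkinLehnerRight_mem_Gamma0 : atkinLehnerRight hβ ∈ CongruenceSubgroup.Gamma0 M := by
  rw [CongruenceSubgroup.Gamma0_mem]
  simp [atkinLehnerRight]

variable (hp : (0 : ℝ) < p) {W : GL (Fin 2) ℝ}
  (hW : (W : Matrix (Fin 2) (Fin 2) ℝ) = !![(p : ℝ) * β, 1; (p : ℝ) * M * γ₀, (p : ℝ)])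
include hW

lemma eq_atkinLehnerLeft_mul_scaleGL :
    W = (atkinLehnerLeft hβ : GL (Fin 2) ℝ) * scaleGL p hp := by
  ext i j
  simp only [Units.val_mul, Matrix.mul_apply, Fin.sum_univ_two, SL2Z_coe_GL_apply]
  fin_cases i <;> fin_cases j <;> simp [hW, scaleGL, atkinLehnerLeft] <;> ring

lemma scaleGL_mul_eq_atkinLehnerRight_mul_scalar :
    scaleGL p hp * W = (atkinLehnerRight hβ : GL (Fin 2) ℝ) *
      Matrix.GeneralLinearGroup.scalar (Fin 2) (Units.mk0 (p : ℝ) hp.ne') := by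
  ext i j
  simp only [Units.val_mul, Matrix.mul_apply, Fin.sum_univ_two, SL2Z_coe_GL_apply,
    Matrix.GeneralLinearGroup.coe_scalar, Matrix.scalar_apply]
  fin_cases i <;> fin_cases j <;> simp [hW, scaleGL, atkinLehnerRight] <;> ring

end AtkinLehner

/-- With `W = (pβ, 1; pMγ₀, p)` (of determinant `p`, where `pβ − Mγ₀ = 1`) and `f` of
weight `k`, character `χ` and level `Γ₀(M)`:
(i) `f∣ₖW = p^{k−1}·χ(p)·f_p` where `f_p(z) = f(pz)`; (ii) `f_p∣ₖW = p⁻¹·f`. -/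
theorem stmt18 (p M : ℕ) (hp : p.Prime) (k : ℤ)
    (χ : DirichletCharacter ℂ M) (f : ℍ → ℂ)
    (hf : ∀ γ : SL(2, ℤ), γ ∈ CongruenceSubgroup.Gamma0 M →
      f ∣[k] γ = χ (((γ : Matrix (Fin 2) (Fin 2) ℤ) 1 1 : ℤ) : ZMod M) • f)
    (β γ₀ : ℤ) (hβ : (p : ℤ) * β - (M : ℤ) * γ₀ = 1)
    (W : GL(2, ℝ)⁺)
    (hW : ((W : GL (Fin 2) ℝ) : Matrix (Fin 2) (Fin 2) ℝ) =
      !![(p : ℝ) * β, 1; (p : ℝ) * M * γ₀, (p : ℝ)]) :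
    f ∣[k] (W : GL (Fin 2) ℝ) =
      ((p : ℂ) ^ (k - 1) * χ ((p : ℕ) : ZMod M)) •
        (fun z : ℍ => f (scaleH p (by exact_mod_cast hp.pos) z)) ∧
    (fun z : ℍ => f (scaleH p (by exact_mod_cast hp.pos) z)) ∣[k] (W : GL (Fin 2) ℝ) = (p : ℂ)⁻¹ • f := by
  have hp0 : (0 : ℝ) < p := by exact_mod_cast hp.pos
  have hpC : (p : ℂ) ≠ 0 := by exact_mod_cast hp.ne_zero
  have hfL : f ∣[k] (atkinLehnerLeft hβ : GL (Fin 2) ℝ) = χ p • f := by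
    rw [← SL_slash, hf _ (atkinLehnerLeft_mem_Gamma0 hβ)]
    simp [atkinLehnerLeft]
  have hfR : f ∣[k] (atkinLehnerRight hβ : GL (Fin 2) ℝ) = f := by
    rw [← SL_slash, hf _ (atkinLehnerRight_mem_Gamma0 hβ)]
    simp [atkinLehnerRight]
  constructor
  · rw [eq_atkinLehnerLeft_mul_scaleGL hβ hp0 hW, SlashAction.slash_mul, hfL,
      smul_slash_of_det_pos k (scaleGL_det_pos hp0), slash_scaleGL, smul_smul, mul_comm,
      Complex.ofReal_natCast]
  · rw [comp_scaleH_eq_smul_slash_scaleGL hp0,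
      smul_slash_of_det_pos k ((Matrix.mem_glpos _).1 W.2),
      ← SlashAction.slash_mul, scaleGL_mul_eq_atkinLehnerRight_mul_scalar hβ hp0 hW,
      SlashAction.slash_mul, hfR, slash_scalar, smul_smul, Units.val_mk0, Complex.ofReal_natCast,
      ← zpow_add₀ hpC]
    norm_num
end
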